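/- If two physical channel directions located on angle-domain samples differ, θ̄_{n'} = θ̄_n + 2b/N with b a nonzero integer, and f_M > f_c > 0, then the largest-power indices at frequency f_M, defined as n_max(ψ) = argmin_{n₁ ∈ {1,…,N}} |(f_M/f_c) ψ - θ̄_{n₁}|, satisfy |n_max(θ̄_{n'}) - n_max(θ̄_n)| ≥ |b| (assuming in each case the argmin is unique and no wrap-around occurs, i.e., both scaled directions lie in [θ̄_1 - 1/N, θ̄_N + 1/N]). -/

import Mathlib

/-!
Every admissible scaled direction lies within half a grid spacing `1/N` of its nearest sample:
if it were farther away, the neighbouring sample on its side would be strictly closer, and at the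
two ends of the grid the no-wrap-around range forbids it. Since `f_M / f_c > 1` and `b ≠ 0`, the
scaled directions are strictly more than `2|b|/N` apart, so by the triangle inequality their
nearest samples are more than `2(|b| - 1)/N` apart, i.e. at least `|b|` grid steps.
-/

lemma abs_sub_le_of_forall_abs_sub_lt {N : ℕ} {θ : Fin N → ℝ} {δ x : ℝ} (hδ : 0 ≤ δ)
    (hstep : ∀ (k : Fin N) (hk : (k : ℕ) + 1 < N), θ ⟨k + 1, hk⟩ = θ k + 2 * δ)
    {h0 : 0 < N} {hlast : N - 1 < N}
    (hlo : θ ⟨0, h0⟩ - δ ≤ x) (hhi : x ≤ θ ⟨N - 1, hlast⟩ + δ)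
    {m : Fin N} (hm : ∀ k, k ≠ m → |x - θ m| < |x - θ k|) :
    |x - θ m| ≤ δ := by
  by_contra! hfar
  rcases lt_abs.mp hfar with hright | hleft
  · by_cases hk : (m : ℕ) + 1 < N
    · have hcloser := hm ⟨m + 1, hk⟩ (by simp [Fin.ext_iff])
      rw [hstep m hk, abs_of_pos (hδ.trans_lt hright)] at hcloser
      exact absurd hcloser (not_lt.mpr (abs_le.mpr ⟨by linarith, by linarith⟩))
    · have hm_last : m = ⟨N - 1, hlast⟩ := Fin.ext (by simp; omega)
      subst hm_last
      linarith
  · by_cases hk : 0 < (m : ℕ)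
    · have hprev : (⟨m - 1, by omega⟩ : Fin N) ≠ m := by simp [Fin.ext_iff]; omega
      have hcloser := hm _ hprev
      have hstep_prev := hstep ⟨m - 1, by omega⟩ (by simp; omega)
      rw [show (⟨(m : ℕ) - 1 + 1, _⟩ : Fin N) = m from Fin.ext (by simp; omega)] at hstep_prev
      rw [abs_of_neg (by linarith), hstep_prev] at hcloser
      exact absurd hcloser (not_lt.mpr (abs_le.mpr ⟨by linarith, by linarith⟩))
    · have hm_zero : m = ⟨0, h0⟩ := Fin.ext (by simp; omega)
      subst hm_zero
      linarith

lemma angleGrid_sub {N : ℕ} {θbar : Fin N → ℝ}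
    (hθ : ∀ k, θbar k = (2 * ((k : ℕ) : ℝ) + 1 - N) / N) (j k : Fin N) :
    θbar j - θbar k = 2 * (((j : ℕ) : ℝ) - (k : ℕ)) / N := by
  rw [hθ, hθ]
  ring

lemma angleGrid_succ {N : ℕ} {θbar : Fin N → ℝ}
    (hθ : ∀ k, θbar k = (2 * ((k : ℕ) : ℝ) + 1 - N) / N) (k : Fin N) (hk : (k : ℕ) + 1 < N) :
    θbar ⟨k + 1, hk⟩ = θbar k + 2 * (1 / N) := by
  rw [← sub_eq_iff_eq_add', angleGrid_sub hθ]
  push_cast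
  ring

/-- If two physical channel directions on angle-domain samples differ by
`θ̄ n' = θ̄ n + 2b/N` with `b` a nonzero integer, and `f_M > f_c > 0`, then the
largest-power indices at frequency `f_M`, `n_max(ψ) = argmin_{n₁} |(f_M/f_c)ψ - θ̄ n₁|`,
satisfy `|n_max(θ̄ n') - n_max(θ̄ n)| ≥ |b|`, assuming each argmin is unique and both
scaled directions lie in `[θ̄ 1 - 1/N, θ̄ N + 1/N]` (no wrap-around). -/
theorem beam_split_index_separation (N : ℕ) (hN : 2 ≤ N)
    (θbar : Fin N → ℝ) (hθ : ∀ k, θbar k = (2 * ((k : ℕ) : ℝ) + 1 - N) / N)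
    (fM fc : ℝ) (hfc : 0 < fc) (hfM : fc < fM)
    (b : ℤ) (hb : b ≠ 0)
    (n n' : Fin N) (hshift : θbar n' = θbar n + 2 * (b : ℝ) / N)
    (hrange : θbar ⟨0, by omega⟩ - 1 / N ≤ fM / fc * θbar n ∧
      fM / fc * θbar n ≤ θbar ⟨N - 1, by omega⟩ + 1 / N)
    (hrange' : θbar ⟨0, by omega⟩ - 1 / N ≤ fM / fc * θbar n' ∧
      fM / fc * θbar n' ≤ θbar ⟨N - 1, by omega⟩ + 1 / N)
    (nmax nmax' : Fin N)
    (hmax : ∀ k : Fin N, k ≠ nmax →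
      |fM / fc * θbar n - θbar nmax| < |fM / fc * θbar n - θbar k|)
    (hmax' : ∀ k : Fin N, k ≠ nmax' →
      |fM / fc * θbar n' - θbar nmax'| < |fM / fc * θbar n' - θbar k|) :
    |((nmax' : ℕ) : ℤ) - ((nmax : ℕ) : ℤ)| ≥ |b| := by
  have hNpos : (0 : ℝ) < N := by positivity
  have hhalf : (0 : ℝ) ≤ 1 / N := by positivity
  have hclose := abs_sub_le_of_forall_abs_sub_lt hhalf (angleGrid_succ hθ) hrange.1 hrange.2 hmax
  have hclose' :=
    abs_sub_le_of_forall_abs_sub_lt hhalf (angleGrid_succ hθ) hrange'.1 hrange'.2 hmax'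
  have hsep : 2 * |(b : ℝ)| / N < |fM / fc * θbar n' - fM / fc * θbar n| := by
    have hratio : 1 < fM / fc := (one_lt_div hfc).mpr hfM
    have hb_pos : 0 < 2 * |(b : ℝ)| / N := by positivity
    rw [← mul_sub, hshift, add_sub_cancel_left, abs_mul, abs_of_pos (one_pos.trans hratio),
      abs_div, abs_mul, abs_two, abs_of_pos hNpos]
    exact lt_mul_of_one_lt_left hb_pos hratio
  have htri : |fM / fc * θbar n' - fM / fc * θbar n|
      ≤ 2 * |((nmax' : ℕ) : ℝ) - (nmax : ℕ)| / N + 2 * (1 / N) := by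
    have hsamples : |θbar nmax' - θbar nmax| = 2 * |((nmax' : ℕ) : ℝ) - (nmax : ℕ)| / N := by
      rw [angleGrid_sub hθ, abs_div, abs_mul, abs_two, abs_of_pos hNpos]
    rw [← hsamples, abs_le]
    rw [abs_le] at hclose hclose'
    constructor <;> linarith [le_abs_self (θbar nmax' - θbar nmax),
      neg_abs_le (θbar nmax' - θbar nmax)]
  have hreal : |(b : ℝ)| < 1 + |((nmax' : ℕ) : ℝ) - (nmax : ℕ)| := by
    have := hsep.trans_le htri
    field_simp at this
    linarith
  have hint : |b| < 1 + |((nmax' : ℕ) : ℤ) - (nmax : ℕ)| := by exact_mod_cast hreal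
  omega
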